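/- Suppose the functor M ⊗_R − takes every acyclic complex of projective R-modules to an acyclic complex of S-modules. Then a complex E of projective R-modules is totally acyclic if and only if the complex e¹_λ(E) (applying X ↦ (X, M ⊗_R X)_1 termwise) is a totally acyclic complex of projective Γ-modules. -/

import Mathlib

open TensorProduct CategoryTheory

universe u
variable (R S M : Type) [CommRing R] [CommRing S]
  [AddCommGroup M] [Module R M] [Module S M] [SMulCommClass R S M]

/-- Modules over the triangular matrix ring Γ = [[R,0],[M,S]]: triples (X,Y,φ). -/
structure TriMod where
  X : Type
  Y : Type
  [addX : AddCommGroup X]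
  [modX : Module R X]
  [addY : AddCommGroup Y]
  [modY : Module S Y]
  phi : (M ⊗[R] X) →ₗ[S] Y

attribute [instance] TriMod.addX TriMod.modX TriMod.addY TriMod.modY

variable {R S M}

lemma lT_aux {X X' : Type} [AddCommGroup X] [Module R X] [AddCommGroup X'] [Module R X']
    (f : X →ₗ[R] X') (s : S) (t : M ⊗[R] X) :
    LinearMap.lTensor M f (s • t) = s • LinearMap.lTensor M f t := by
  induction t using TensorProduct.induction_on with
  | zero => simp
  | tmul m x => simp [TensorProduct.smul_tmul']
  | add a b ha hb => simp only [smul_add, map_add, ha, hb]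

/-- `M ⊗ f` as an `S`-linear map. -/
noncomputable def lT {X X' : Type} [AddCommGroup X] [Module R X] [AddCommGroup X'] [Module R X']
    (f : X →ₗ[R] X') : (M ⊗[R] X) →ₗ[S] (M ⊗[R] X') where
  toFun := LinearMap.lTensor M f
  map_add' := map_add _
  map_smul' s t := lT_aux f s t

@[simp] lemma lT_id {X : Type} [AddCommGroup X] [Module R X] :
    (lT (LinearMap.id : X →ₗ[R] X) : (M ⊗[R] X) →ₗ[S] (M ⊗[R] X)) = LinearMap.id := by
  apply LinearMap.ext; intro t
  simp [lT]

lemma lT_comp {X X' X'' : Type} [AddCommGroup X] [Module R X] [AddCommGroup X'] [Module R X']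
    [AddCommGroup X''] [Module R X''] (f : X →ₗ[R] X') (g : X' →ₗ[R] X'') :
    (lT (g ∘ₗ f) : (M ⊗[R] X) →ₗ[S] _) = (lT g) ∘ₗ (lT f) := by
  apply LinearMap.ext; intro t
  simp [lT, LinearMap.lTensor_comp]

@[simp] lemma lT_zero {X X' : Type} [AddCommGroup X] [Module R X] [AddCommGroup X'] [Module R X'] :
    (lT (0 : X →ₗ[R] X') : (M ⊗[R] X) →ₗ[S] (M ⊗[R] X')) = 0 := by
  apply LinearMap.ext; intro t
  simp [lT]

variable (R S M) in
@[ext] structure TriModHom (A B : TriMod R S M) where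
  f : A.X →ₗ[R] B.X
  g : A.Y →ₗ[S] B.Y
  comm : g ∘ₗ A.phi = B.phi ∘ₗ lT f

instance : Category (TriMod R S M) where
  Hom A B := TriModHom R S M A B
  id A := ⟨LinearMap.id, LinearMap.id, by simp⟩
  comp {A B C} u v := ⟨v.f ∘ₗ u.f, v.g ∘ₗ u.g, by
    rw [LinearMap.comp_assoc, u.comm, ← LinearMap.comp_assoc, v.comm, lT_comp,
      LinearMap.comp_assoc]⟩
  id_comp u := by apply TriModHom.ext <;> simp
  comp_id u := by apply TriModHom.ext <;> simp
  assoc u v w := by apply TriModHom.ext <;> simp [LinearMap.comp_assoc]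

instance instZeroHom (A B : TriMod R S M) : Zero (A ⟶ B) := ⟨⟨0, 0, by simp⟩⟩

@[simp] lemma zero_f (A B : TriMod R S M) : (0 : A ⟶ B).f = 0 := rfl
@[simp] lemma zero_g (A B : TriMod R S M) : (0 : A ⟶ B).g = 0 := rfl
@[simp] lemma comp_f {A B C : TriMod R S M} (u : A ⟶ B) (v : B ⟶ C) :
    (u ≫ v).f = v.f ∘ₗ u.f := rfl
@[simp] lemma comp_g {A B C : TriMod R S M} (u : A ⟶ B) (v : B ⟶ C) :
    (u ≫ v).g = v.g ∘ₗ u.g := rfl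
@[simp] lemma id_f (A : TriMod R S M) : TriModHom.f (𝟙 A) = LinearMap.id := rfl
@[simp] lemma id_g (A : TriMod R S M) : TriModHom.g (𝟙 A) = LinearMap.id := rfl

instance : Limits.HasZeroMorphisms (TriMod R S M) where
  comp_zero u C := by apply TriModHom.ext <;> simp
  zero_comp A {B C} u := by apply TriModHom.ext <;> simp
section Generic
open CategoryTheory Limits
variable {C : Type u} [Category.{v} C] [Limits.HasZeroMorphisms C]

/-- A complex of projectives is totally acyclic if it is acyclic and stays acyclic
under `Hom(-, P)` for every projective `P`. -/
def IsTotallyAcyclic (E : ChainComplex C ℤ) : Prop :=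
  (∀ i, Projective (E.X i)) ∧ (∀ i, E.ExactAt i) ∧
  ∀ (P : C), Projective P → ∀ (i : ℤ) (g : E.X i ⟶ P), E.d (i + 1) i ≫ g = 0 →
    ∃ h : E.X (i - 1) ⟶ P, E.d i (i - 1) ≫ h = g

/-- A complex of injectives is totally acyclic if it is acyclic and stays acyclic
under `Hom(I, -)` for every injective `I`. -/
def IsInjTotallyAcyclic (E : ChainComplex C ℤ) : Prop :=
  (∀ i, Injective (E.X i)) ∧ (∀ i, E.ExactAt i) ∧
  ∀ (I : C), Injective I → ∀ (i : ℤ) (g : I ⟶ E.X i), g ≫ E.d i (i - 1) = 0 →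
    ∃ h : I ⟶ E.X (i + 1), h ≫ E.d (i + 1) i = g

/-- An object is Gorenstein projective if it is a syzygy (a kernel of a differential)
of a totally acyclic complex of projectives. -/
def IsGorensteinProjective (G : C) : Prop :=
  ∃ (E : ChainComplex C ℤ), IsTotallyAcyclic E ∧
    ∃ (ι : G ⟶ E.X 0) (w : ι ≫ E.d 0 (-1) = 0),
      Nonempty (IsLimit (KernelFork.ofι ι w))

/-- An object is Gorenstein injective if it is a cosyzygy (a cokernel of a differential)
of a totally acyclic complex of injectives. -/
def IsGorensteinInjective (G : C) : Prop :=
  ∃ (E : ChainComplex C ℤ), IsInjTotallyAcyclic E ∧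
    ∃ (π : E.X 0 ⟶ G) (w : E.d 1 0 ≫ π = 0),
      Nonempty (IsColimit (CokernelCofork.ofπ π w))

end Generic

/-- `Ext¹_A(P, N) = 0`, phrased as: every extension of `P` by `N` splits. -/
def Ext1Vanishes (A : Type) [Ring A] (P N : Type) [AddCommGroup P] [Module A P]
    [AddCommGroup N] [Module A N] : Prop :=
  ∀ (D : Type) [AddCommGroup D] [Module A D] (i : N →ₗ[A] D) (p : D →ₗ[A] P),
    Function.Injective i → Function.Surjective p → Function.Exact i p →
    ∃ s : P →ₗ[A] D, p ∘ₗ s = LinearMap.id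

/-- A module is Gorenstein projective. -/
def ModGorensteinProjective (A : Type) [Ring A] (N : Type) [AddCommGroup N] [Module A N] :
    Prop := IsGorensteinProjective (ModuleCat.of A N)

/-- A module is Gorenstein injective. -/
def ModGorensteinInjective (A : Type) [Ring A] (N : Type) [AddCommGroup N] [Module A N] :
    Prop := IsGorensteinInjective (ModuleCat.of A N)
section Constructions
open CategoryTheory Limits
variable {R S M : Type} [CommRing R] [CommRing S]
  [AddCommGroup M] [Module R M] [Module S M] [SMulCommClass R S M]

variable (R S M) in
/-- The Γ-module `e¹_λ(X) = (X, M ⊗ X)_1`. -/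
noncomputable def e1obj (X : Type) [AddCommGroup X] [Module R X] : TriMod R S M :=
  ⟨X, M ⊗[R] X, LinearMap.id⟩

variable (R S M) in
/-- The Γ-module `e²_λ(Y) = (0, Y)_0`. -/
noncomputable def e2obj (Y : Type) [AddCommGroup Y] [Module S Y] : TriMod R S M :=
  ⟨PUnit, Y, 0⟩

variable (S M) in
/-- The complex `M ⊗[R] E` of `S`-modules obtained from a complex `E` of `R`-modules. -/
noncomputable def tensorComplex (E : ChainComplex (ModuleCat R) ℤ) :
    ChainComplex (ModuleCat S) ℤ where
  X i := ModuleCat.of S (M ⊗[R] E.X i)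
  d i j := ModuleCat.ofHom (lT (E.d i j).hom)
  shape i j h := by
    have h0 : E.d i j = 0 := E.shape i j h
    apply ModuleCat.hom_ext
    rw [h0]
    exact lT_zero
  d_comp_d' i j k _ _ := by
    have h0 : ((E.d j k).hom ∘ₗ (E.d i j).hom) = 0 :=
      congrArg ModuleCat.Hom.hom (E.d_comp_d i j k)
    apply ModuleCat.hom_ext
    show lT (M := M) (S := S) (E.d j k).hom ∘ₗ lT (E.d i j).hom = 0
    rw [← lT_comp, h0, lT_zero]

variable (R S M) in
/-- Condition (1): `M ⊗[R] -` takes acyclic complexes of projective `R`-modules to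
acyclic complexes of `S`-modules. -/
def Cond1 : Prop :=
  ∀ (E : ChainComplex (ModuleCat R) ℤ),
    (∀ i, Module.Projective R (E.X i)) → (∀ i, E.ExactAt i) →
    ∀ i, (tensorComplex S M E).ExactAt i

variable (S M) in
/-- `N` lies in `Add(M)`: it is a direct summand of a direct sum of copies of `M`. -/
def MemAdd (N : Type) [AddCommGroup N] [Module S N] : Prop :=
  ∃ (I : Type) (ι : N →ₗ[S] (I →₀ M)) (p : (I →₀ M) →ₗ[S] N), p ∘ₗ ι = LinearMap.id

variable (R S M) in
/-- Condition (2): `Add(M) ⊆ GProj(S)ᗮ`. -/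
def Cond2 : Prop :=
  ∀ (N : Type) [AddCommGroup N] [Module S N], MemAdd S M N →
    ∀ (G : Type) [AddCommGroup G] [Module S G],
      ModGorensteinProjective S G → Ext1Vanishes S G N

end Constructions
section MoreConstructions
open CategoryTheory Limits
variable {R S M : Type} [CommRing R] [CommRing S]
  [AddCommGroup M] [Module R M] [Module S M] [SMulCommClass R S M]

variable (R S M) in
/-- Termwise application of `e¹_λ` to a complex of `R`-modules. -/
noncomputable def e1c (E : ChainComplex (ModuleCat R) ℤ) : ChainComplex (TriMod R S M) ℤ where
  X i := e1obj R S M (E.X i)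
  d i j := ⟨(E.d i j).hom, lT (E.d i j).hom, by
    show lT (E.d i j).hom ∘ₗ LinearMap.id = LinearMap.id ∘ₗ _
    rfl⟩
  shape i j h := by
    have h0 : (E.d i j).hom = 0 := congrArg ModuleCat.Hom.hom (E.shape i j h)
    apply TriModHom.ext <;> simp [h0] <;> rfl
  d_comp_d' i j k _ _ := by
    have h0 : ((E.d j k).hom ∘ₗ (E.d i j).hom) = 0 :=
      congrArg ModuleCat.Hom.hom (E.d_comp_d i j k)
    apply TriModHom.ext <;> dsimp only [comp_f, comp_g]
    · exact h0
    · show lT (E.d j k).hom ∘ₗ lT (E.d i j).hom = _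
      rw [← lT_comp, h0, lT_zero]; rfl

variable (R S M) in
/-- Termwise application of `e²_λ` to a complex of `S`-modules. -/
noncomputable def e2c (E : ChainComplex (ModuleCat S) ℤ) : ChainComplex (TriMod R S M) ℤ where
  X i := e2obj R S M (E.X i)
  d i j := ⟨0, (E.d i j).hom, by
    show (E.d i j).hom ∘ₗ (0 : (M ⊗[R] PUnit) →ₗ[S] _) = _
    simp <;> rfl⟩
  shape i j h := by
    have h0 : (E.d i j).hom = 0 := congrArg ModuleCat.Hom.hom (E.shape i j h)
    apply TriModHom.ext <;> simp [h0] <;> rfl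
  d_comp_d' i j k _ _ := by
    have h0 : ((E.d j k).hom ∘ₗ (E.d i j).hom) = 0 :=
      congrArg ModuleCat.Hom.hom (E.d_comp_d i j k)
    apply TriModHom.ext <;> dsimp only [comp_f, comp_g]
    · simp
    · exact h0

variable (R S M) in
/-- The complex of first components of a complex of Γ-modules. -/
noncomputable def compA (E : ChainComplex (TriMod R S M) ℤ) : ChainComplex (ModuleCat R) ℤ where
  X i := ModuleCat.of R (E.X i).X
  d i j := ModuleCat.ofHom (E.d i j).f
  shape i j h := by rw [E.shape i j h]; rfl
  d_comp_d' i j k _ _ := by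
    have h0 := congrArg TriModHom.f (E.d_comp_d i j k)
    simp only [comp_f, zero_f] at h0
    apply ModuleCat.hom_ext
    exact h0

lemma range_le_comap {A B : TriMod R S M} (u : A ⟶ B) :
    LinearMap.range A.phi ≤ (LinearMap.range B.phi).comap u.g := by
  rintro y ⟨t, rfl⟩
  exact ⟨lT u.f t, (LinearMap.congr_fun u.comm t).symm⟩

variable (R S M) in
/-- The complex `Coker E` of the cokernels of the structure maps of a complex of
Γ-modules. -/
noncomputable def cokerC (E : ChainComplex (TriMod R S M) ℤ) : ChainComplex (ModuleCat S) ℤ where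
  X i := ModuleCat.of S ((E.X i).Y ⧸ LinearMap.range (E.X i).phi)
  d i j := ModuleCat.ofHom (Submodule.mapQ _ _ (E.d i j).g (range_le_comap (E.d i j)))
  shape i j h := by
    apply ModuleCat.hom_ext; apply LinearMap.ext; intro x
    obtain ⟨y, rfl⟩ := Submodule.Quotient.mk_surjective _ x
    show Submodule.mapQ _ _ (E.d i j).g (range_le_comap (E.d i j)) (Submodule.Quotient.mk y) = 0
    rw [Submodule.mapQ_apply, E.shape i j h]
    rfl
  d_comp_d' i j k _ _ := by
    apply ModuleCat.hom_ext; apply LinearMap.ext; intro x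
    obtain ⟨y, rfl⟩ := Submodule.Quotient.mk_surjective _ x
    have h0 := congrArg TriModHom.g (E.d_comp_d i j k)
    simp only [comp_g, zero_g] at h0
    show Submodule.Quotient.mk ((E.d j k).g ((E.d i j).g y)) = 0
    rw [← LinearMap.comp_apply, h0]
    rfl

end MoreConstructions
section HomModule
open CategoryTheory Limits
variable {R S M : Type} [CommRing R] [CommRing S]
  [AddCommGroup M] [Module R M] [Module S M] [SMulCommClass R S M]

variable (S M) in
/-- Scalar multiplication by `r : R` on `M`, as an `S`-linear map. -/
def rsmulM (r : R) : M →ₗ[S] M where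
  toFun m := r • m
  map_add' := smul_add r
  map_smul' s m := (smul_comm r s m)

/-- The right `R`-module structure on `Hom_S(M, Y)` coming from the `R`-action on `M`. -/
instance homRModule (Y : Type) [AddCommGroup Y] [Module S Y] : Module R (M →ₗ[S] Y) where
  smul r f := f ∘ₗ rsmulM S M r
  one_smul f := by
    apply LinearMap.ext; intro m
    show f ((1 : R) • m) = f m
    rw [one_smul]
  mul_smul r r' f := by
    apply LinearMap.ext; intro m
    show f ((r * r') • m) = f (r' • r • m)
    rw [mul_comm, mul_smul]
  smul_zero r := by apply LinearMap.ext; intro m; rfl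
  smul_add r f g := by apply LinearMap.ext; intro m; rfl
  add_smul r r' f := by
    apply LinearMap.ext; intro m
    show f ((r + r') • m) = f (r • m) + f (r' • m)
    rw [add_smul, map_add]
  zero_smul f := by
    apply LinearMap.ext; intro m
    show f ((0 : R) • m) = 0
    rw [zero_smul, map_zero]

@[simp] lemma homRModule_smul_apply {Y : Type} [AddCommGroup Y] [Module S Y]
    (r : R) (f : M →ₗ[S] Y) (m : M) : (r • f) m = f (r • m) := rfl

/-- Postcomposition `Hom_S(M, g)`, as an `R`-linear map. -/
def hT {Y Y' : Type} [AddCommGroup Y] [Module S Y] [AddCommGroup Y'] [Module S Y']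
    (g : Y →ₗ[S] Y') : (M →ₗ[S] Y) →ₗ[R] (M →ₗ[S] Y') where
  toFun f := g ∘ₗ f
  map_add' f f' := by apply LinearMap.ext; intro m; simp
  map_smul' r f := rfl

@[simp] lemma hT_zero {Y Y' : Type} [AddCommGroup Y] [Module S Y] [AddCommGroup Y']
    [Module S Y'] : hT (R := R) (M := M) (0 : Y →ₗ[S] Y') = 0 := by
  apply LinearMap.ext; intro f; apply LinearMap.ext; intro m; rfl

lemma hT_comp {Y Y' Y'' : Type} [AddCommGroup Y] [Module S Y] [AddCommGroup Y']
    [Module S Y'] [AddCommGroup Y''] [Module S Y''] (g : Y →ₗ[S] Y') (g' : Y' →ₗ[S] Y'') :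
    hT (R := R) (M := M) (g' ∘ₗ g) = (hT g') ∘ₗ (hT g) := by
  apply LinearMap.ext; intro f; apply LinearMap.ext; intro m; rfl

variable (R M) in
/-- The complex `Hom_S(M, E)` of `R`-modules obtained from a complex `E` of `S`-modules. -/
noncomputable def homComplex (E : ChainComplex (ModuleCat S) ℤ) :
    ChainComplex (ModuleCat R) ℤ where
  X i := ModuleCat.of R (M →ₗ[S] E.X i)
  d i j := ModuleCat.ofHom (hT (E.d i j).hom : _ →ₗ[R] _)
  shape i j h := by
    have h0 : (E.d i j).hom = 0 := congrArg ModuleCat.Hom.hom (E.shape i j h)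
    apply ModuleCat.hom_ext
    rw [h0, hT_zero]
    rfl
  d_comp_d' i j k _ _ := by
    have h0 : ((E.d j k).hom ∘ₗ (E.d i j).hom) = 0 :=
      congrArg ModuleCat.Hom.hom (E.d_comp_d i j k)
    apply ModuleCat.hom_ext
    show (hT (R := R) (M := M) (E.d j k).hom) ∘ₗ
      (hT (R := R) (M := M) (E.d i j).hom) = 0
    rw [← hT_comp, h0, hT_zero]

variable (R S M) in
/-- Condition (3): `Hom_S(M, -)` takes acyclic complexes of injective `S`-modules to
acyclic complexes of `R`-modules. -/
def Cond3 : Prop :=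
  ∀ (E : ChainComplex (ModuleCat S) ℤ),
    (∀ i, Module.Injective S (E.X i)) → (∀ i, E.ExactAt i) →
    ∀ i, (homComplex R M E).ExactAt i

variable (R S M) in
/-- Condition (4): `Hom_S(M, I) ∈ ᗮGInj(R)` for every injective `S`-module `I`. -/
def Cond4 : Prop :=
  ∀ (I : Type) [AddCommGroup I] [Module S I], Module.Injective S I →
    ∀ (G : Type) [AddCommGroup G] [Module R G],
      ModGorensteinInjective R G → Ext1Vanishes R (M →ₗ[S] I) G

variable (S M) in
/-- The evaluation map `M ⊗_R Hom_S(M, Y) → Y` as an additive map. -/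
noncomputable def evMapAdd (Y : Type) [AddCommGroup Y] [Module S Y] :
    (M ⊗[R] (M →ₗ[S] Y)) →+ Y :=
  TensorProduct.liftAddHom
    (AddMonoidHom.mk' (fun m => AddMonoidHom.mk' (fun f : M →ₗ[S] Y => f m)
      (fun f g => rfl)) (fun m m' => by
        apply AddMonoidHom.ext; intro f; exact f.map_add m m'))
    (fun r m f => by show f (r • m) = (r • f) m; rfl)

lemma evMapAdd_smul {Y : Type} [AddCommGroup Y] [Module S Y] (s : S)
    (t : M ⊗[R] (M →ₗ[S] Y)) : evMapAdd S M Y (s • t) = s • evMapAdd S M Y t := by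
  induction t using TensorProduct.induction_on with
  | zero => simp
  | tmul m f =>
    rw [TensorProduct.smul_tmul']
    show (f : M →ₗ[S] Y) (s • m) = s • f m
    exact f.map_smul s m
  | add a b ha hb => simp only [map_add, smul_add, ha, hb]

variable (S M) in
/-- The evaluation map `M ⊗_R Hom_S(M, Y) → Y`. -/
noncomputable def evMap (Y : Type) [AddCommGroup Y] [Module S Y] :
    (M ⊗[R] (M →ₗ[S] Y)) →ₗ[S] Y where
  toFun := evMapAdd S M Y
  map_add' := map_add _
  map_smul' := evMapAdd_smul

variable (R S M) in
/-- The Γ-module `e²_ρ(Y) = (Hom_S(M,Y), Y)_1`. -/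
noncomputable def e2rhoObj (Y : Type) [AddCommGroup Y] [Module S Y] : TriMod R S M :=
  ⟨M →ₗ[S] Y, Y, evMap S M Y⟩

end HomModule
section Functors
open CategoryTheory Limits
variable (R S M : Type) [CommRing R] [CommRing S]
  [AddCommGroup M] [Module R M] [Module S M] [SMulCommClass R S M]

/-- The evaluation functor `e¹ : Mod Γ → Mod R`, `(X,Y)_φ ↦ X`. -/
noncomputable def ev1 : TriMod R S M ⥤ ModuleCat R where
  obj A := ModuleCat.of R A.X
  map u := ModuleCat.ofHom u.f
  map_id A := rfl
  map_comp u v := rfl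

/-- The functor `e¹_λ : Mod R → Mod Γ`, `X ↦ (X, M ⊗ X)_1`. -/
noncomputable def e1fun : ModuleCat R ⥤ TriMod R S M where
  obj X := e1obj R S M X
  map {X X'} f := ⟨f.hom, lT f.hom, by
    show lT (M := M) (S := S) f.hom ∘ₗ LinearMap.id = LinearMap.id ∘ₗ _
    rfl⟩
  map_id X := by
    apply TriModHom.ext
    · rfl
    · exact lT_id
  map_comp {X X' X''} f g := by
    apply TriModHom.ext <;> dsimp only [comp_f, comp_g]
    · rfl
    · show lT (M := M) (S := S) (g.hom ∘ₗ f.hom) = _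
      rw [lT_comp]; rfl

/-- The evaluation functor `e² : Mod Γ → Mod S`, `(X,Y)_φ ↦ Y`. -/
noncomputable def ev2 : TriMod R S M ⥤ ModuleCat S where
  obj A := ModuleCat.of S A.Y
  map u := ModuleCat.ofHom u.g
  map_id A := rfl
  map_comp u v := rfl

/-- The functor `e²_λ : Mod S → Mod Γ`, `Y ↦ (0, Y)_0`. -/
noncomputable def e2fun : ModuleCat S ⥤ TriMod R S M where
  obj Y := e2obj R S M Y
  map {Y Y'} g := ⟨LinearMap.id, g.hom, by
    show g.hom ∘ₗ (0 : (M ⊗[R] PUnit) →ₗ[S] Y) = _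
    simp [e2obj] <;> rfl⟩
  map_id Y := by apply TriModHom.ext <;> rfl
  map_comp f g := by
    apply TriModHom.ext
    · show LinearMap.id ∘ₗ LinearMap.id = (LinearMap.id : PUnit →ₗ[R] PUnit)
      simp
    · rfl

/-- The functor `e²_ρ : Mod S → Mod Γ`, `Y ↦ (Hom_S(M,Y), Y)_1`. -/
noncomputable def e2rhoFun : ModuleCat S ⥤ TriMod R S M where
  obj Y := e2rhoObj R S M Y
  map {Y Y'} g := ⟨hT g.hom, g.hom, by
    apply LinearMap.ext; intro t
    induction t using TensorProduct.induction_on with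
    | zero => simp
    | tmul m f => rfl
    | add a b ha hb => simp only [map_add, ha, hb]⟩
  map_id Y := by
    apply TriModHom.ext <;> dsimp only [id_f, id_g]
    · apply LinearMap.ext; intro f; apply LinearMap.ext; intro m; rfl
    · rfl
  map_comp f g := by
    apply TriModHom.ext <;> dsimp only [comp_f, comp_g]
    · apply LinearMap.ext; intro u; apply LinearMap.ext; intro m; rfl
    · rfl

end Functors

section Props
open CategoryTheory Limits
variable {R S M : Type} [CommRing R] [CommRing S]
  [AddCommGroup M] [Module R M] [Module S M] [SMulCommClass R S M]

/-- `Ext¹_Γ(P, A) = 0`: every extension `0 → A → D → P → 0` of Γ-modules splits. -/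
def TriExt1Vanishes (P A : TriMod R S M) : Prop :=
  ∀ (D : TriMod R S M) (i : A ⟶ D) (p : D ⟶ P) (w : i ≫ p = 0), Epi p →
    Nonempty (IsLimit (KernelFork.ofι i w)) → ∃ s : P ⟶ D, s ≫ p = 𝟙 P

/-- `A ∈ GProj(Γ)ᗮ`. -/
def TriMemGProjPerp (A : TriMod R S M) : Prop :=
  ∀ G : TriMod R S M, IsGorensteinProjective G → TriExt1Vanishes G A

/-- `A ∈ ᗮGInj(Γ)`. -/
def TriMemPerpGInj (A : TriMod R S M) : Prop :=
  ∀ G : TriMod R S M, IsGorensteinInjective G → TriExt1Vanishes A G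

variable (R S M) in
/-- `Γ` is virtually Gorenstein: `GProj(Γ)ᗮ = ᗮGInj(Γ)`. -/
def TriVirtuallyGorenstein : Prop :=
  ∀ A : TriMod R S M, TriMemGProjPerp A ↔ TriMemPerpGInj A

/-- A ring `A` is virtually Gorenstein: `GProj(A)ᗮ = ᗮGInj(A)`. -/
def RingVirtuallyGorenstein (A : Type) [Ring A] : Prop :=
  ∀ (N : Type) [AddCommGroup N] [Module A N],
    (∀ (G : Type) [AddCommGroup G] [Module A G],
        ModGorensteinProjective A G → Ext1Vanishes A G N) ↔
    (∀ (G : Type) [AddCommGroup G] [Module A G],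
        ModGorensteinInjective A G → Ext1Vanishes A N G)

/-- An object of a category with zero morphisms is indecomposable: it is nonzero and its
only idempotent endomorphisms are `0` and the identity. -/
def Indec {C : Type u} [Category.{v} C] [Limits.HasZeroMorphisms C] (A : C) : Prop :=
  ¬ IsZero A ∧ ∀ e : A ⟶ A, e ≫ e = e → e = 0 ∨ e = 𝟙 A

/-- A Γ-module is finitely generated iff both components are. -/
def TriFG (A : TriMod R S M) : Prop := Module.Finite R A.X ∧ Module.Finite S A.Y

variable (R S M) in
/-- `Γ` is of finite Cohen-Macaulay type. -/
def TriCMFinite : Prop :=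
  ∃ (n : ℕ) (rep : Fin n → TriMod R S M),
    ∀ A : TriMod R S M, TriFG A → Indec A → IsGorensteinProjective A →
      ∃ i : Fin n, Nonempty (A ≅ rep i)

variable (R S M) in
/-- `Γ` is Cohen-Macaulay free. -/
def TriCMFree : Prop :=
  ∀ A : TriMod R S M, TriFG A → IsGorensteinProjective A → Projective A

/-- A ring is of finite Cohen-Macaulay type: up to isomorphism, only finitely many
indecomposable finitely generated Gorenstein projective modules. -/
def RingCMFinite (A : Type) [Ring A] : Prop :=
  ∃ (n : ℕ) (rep : Fin n → ModuleCat.{0} A),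
    ∀ N : ModuleCat.{0} A, Module.Finite A N → Indec N → IsGorensteinProjective N →
      ∃ i : Fin n, Nonempty (N ≅ rep i)

/-- A ring is Cohen-Macaulay free: every finitely generated Gorenstein projective module
is projective. -/
def RingCMFree (A : Type) [Ring A] : Prop :=
  ∀ (N : Type) [AddCommGroup N] [Module A N],
    Module.Finite A N → ModGorensteinProjective A N → Module.Projective A N

end Props

/-!
Kernels of Γ-modules are computed componentwise, and so are cokernels, because `M ⊗_R -` is
right exact. Hence a short complex of Γ-modules that is exact in both components is exact, and
an exact one is exact in its first component. So `e¹_λ(E)` is acyclic whenever `E` and `M ⊗_R E`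
are, which the hypothesis guarantees for acyclic complexes of projectives, and conversely its
acyclicity gives that of `E`.

For the Hom-condition, `e¹_λ` is left adjoint to `(X, Y)_φ ↦ X`, and this functor preserves
projectives since its own right adjoint `X ↦ (X, 0)_0` preserves epimorphisms. A map from
`e¹_λ(Eᵢ)` to a projective Γ-module `P` is thus a map `Eᵢ → P.X` into a projective `R`-module;
conversely a map `Eᵢ → Q` into a projective `R`-module is the first component of the map
`e¹_λ(Eᵢ) → e¹_λ(Q)` into a projective Γ-module. Lifts transfer in both directions.
-/

namespace TriMod

open CategoryTheory Limits

section Morphisms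

variable {A B C : TriMod R S M}

lemma comm_apply (u : A ⟶ B) (t : M ⊗[R] A.X) : u.g (A.phi t) = B.phi (lT (S := S) u.f t) :=
  LinearMap.congr_fun u.comm t

lemma lT_comp_apply {X X' X'' : Type} [AddCommGroup X] [Module R X] [AddCommGroup X']
    [Module R X'] [AddCommGroup X''] [Module R X''] (f : X →ₗ[R] X') (g : X' →ₗ[R] X'')
    (t : M ⊗[R] X) : lT (S := S) g (lT (S := S) f t) = lT (S := S) (g ∘ₗ f) t := by
  rw [lT_comp, LinearMap.comp_apply]

lemma comp_eq_zero_iff (u : A ⟶ B) (v : B ⟶ C) :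
    u ≫ v = 0 ↔ v.f ∘ₗ u.f = 0 ∧ v.g ∘ₗ u.g = 0 :=
  ⟨fun h => ⟨congrArg TriModHom.f h, congrArg TriModHom.g h⟩, fun h => TriModHom.ext h.1 h.2⟩

lemma epi_of_surjective (p : A ⟶ B) (hf : Function.Surjective p.f)
    (hg : Function.Surjective p.g) : Epi p :=
  ⟨fun _ _ h => TriModHom.ext ((LinearMap.cancel_right hf).1 (congrArg TriModHom.f h))
    ((LinearMap.cancel_right hg).1 (congrArg TriModHom.g h))⟩

lemma mono_of_injective (p : A ⟶ B) (hf : Function.Injective p.f)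
    (hg : Function.Injective p.g) : Mono p :=
  ⟨fun _ _ h => TriModHom.ext ((LinearMap.cancel_left hf).1 (congrArg TriModHom.f h))
    ((LinearMap.cancel_left hg).1 (congrArg TriModHom.g h))⟩

end Morphisms

abbrev ofFst (X : Type) [AddCommGroup X] [Module R X] : TriMod R S M := ⟨X, PUnit, 0⟩

def toOfFst {A : TriMod R S M} {X : Type} [AddCommGroup X] [Module R X]
    (l : A.X →ₗ[R] X) : A ⟶ ofFst X :=
  ⟨l, 0, Subsingleton.elim _ _⟩

lemma isZero_ofFst (X : Type) [AddCommGroup X] [Module R X] [Subsingleton X] :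
    IsZero (ofFst X : TriMod R S M) :=
  (IsZero.iff_id_eq_zero _).2 (TriModHom.ext (Subsingleton.elim _ _) (Subsingleton.elim _ _))

lemma surjective_f_of_forall_comp_eq_zero {A B : TriMod R S M} {p : A ⟶ B}
    (h : ∀ (W : TriMod R S M) (q : B ⟶ W), p ≫ q = 0 → q = 0) : Function.Surjective p.f := by
  have hq := h _ (toOfFst (LinearMap.range p.f).mkQ)
    ((comp_eq_zero_iff _ _).2 ⟨LinearMap.range_mkQ_comp _, Subsingleton.elim _ _⟩)
  intro y
  exact LinearMap.mem_range.1
    ((Submodule.Quotient.mk_eq_zero _).1 (LinearMap.congr_fun (congrArg TriModHom.f hq) y))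

lemma surjective_f_of_epi {A B : TriMod R S M} (p : A ⟶ B) [Epi p] : Function.Surjective p.f :=
  surjective_f_of_forall_comp_eq_zero fun _ _ hq => (cancel_epi p).1 (hq.trans comp_zero.symm)

lemma surjective_f_of_isZero_cokernel {A B : TriMod R S M} {p : A ⟶ B} {c : CokernelCofork p}
    (hc : IsColimit c) (hz : IsZero c.pt) : Function.Surjective p.f :=
  surjective_f_of_forall_comp_eq_zero fun _ q hq => by
    obtain ⟨l, hl⟩ := CokernelCofork.IsColimit.desc' hc q hq
    rw [← hl, hz.eq_of_src l 0, comp_zero]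

/-- `P ↦ P.X` preserves projectives: its right adjoint `X ↦ (X, 0)_0` preserves epimorphisms. -/
lemma projective_fst_of_projective (P : TriMod R S M) [Projective P] :
    Module.Projective R P.X := by
  refine Module.Projective.of_lifting_property'' fun f hf => ?_
  have : Epi (toOfFst (A := ofFst (S := S) (M := M) (P.X →₀ R)) f) :=
    epi_of_surjective _ hf fun _ => ⟨0, Subsingleton.elim _ _⟩
  obtain ⟨s, hs⟩ := Projective.factors (toOfFst (A := P) LinearMap.id)
    (toOfFst (A := ofFst (S := S) (M := M) (P.X →₀ R)) f)
  exact ⟨s.f, congrArg TriModHom.f hs⟩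

section E1obj

variable {A : TriMod R S M} {X : Type} [AddCommGroup X] [Module R X]

noncomputable def e1objLift (l : X →ₗ[R] A.X) : e1obj R S M X ⟶ A :=
  ⟨l, A.phi ∘ₗ lT l, LinearMap.comp_id _⟩

/-- Together with `e1objLift`, this is the adjunction between `e¹_λ` and `(X, Y)_φ ↦ X`. -/
lemma e1obj_hom_ext {u v : e1obj R S M X ⟶ A} (h : u.f = v.f) : u = v := by
  have hu : u.g = A.phi ∘ₗ lT (S := S) u.f := u.comm
  have hv : v.g = A.phi ∘ₗ lT (S := S) v.f := v.comm
  exact TriModHom.ext h (by rw [hu, hv, h])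

end E1obj

lemma projective_e1obj (N : Type) [AddCommGroup N] [Module R N] [Module.Projective R N] :
    Projective (e1obj R S M N) where
  factors u e _ := by
    have : Module.Projective R (e1obj R S M N).X := ‹Module.Projective R N›
    obtain ⟨l, hl⟩ := Module.projective_lifting_property e.f u.f (surjective_f_of_epi e)
    exact ⟨e1objLift l, e1obj_hom_ext hl⟩

section Kernels

variable {B C W : TriMod R S M} (v : B ⟶ C)

noncomputable def kerObj : TriMod R S M :=
  ⟨LinearMap.ker v.f, LinearMap.ker v.g,
    (B.phi ∘ₗ lT (LinearMap.ker v.f).subtype).codRestrict _ fun t => by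
      rw [LinearMap.mem_ker, LinearMap.comp_apply, comm_apply, lT_comp_apply,
        LinearMap.comp_ker_subtype, lT_zero, LinearMap.zero_apply, map_zero]⟩

noncomputable def kerι : kerObj v ⟶ B :=
  ⟨(LinearMap.ker v.f).subtype, (LinearMap.ker v.g).subtype, rfl⟩

lemma kerι_comp : kerι v ≫ v = 0 :=
  (comp_eq_zero_iff _ _).2 ⟨LinearMap.comp_ker_subtype _, LinearMap.comp_ker_subtype _⟩

variable {v}

lemma f_mem_ker_of_comp_eq_zero {k : W ⟶ B} (hk : k ≫ v = 0) (x : W.X) :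
    k.f x ∈ LinearMap.ker v.f :=
  LinearMap.congr_fun (congrArg TriModHom.f hk) x

lemma g_mem_ker_of_comp_eq_zero {k : W ⟶ B} (hk : k ≫ v = 0) (y : W.Y) :
    k.g y ∈ LinearMap.ker v.g :=
  LinearMap.congr_fun (congrArg TriModHom.g hk) y

noncomputable def kerLift (k : W ⟶ B) (hk : k ≫ v = 0) : W ⟶ kerObj v :=
  ⟨k.f.codRestrict _ (f_mem_ker_of_comp_eq_zero hk),
    k.g.codRestrict _ (g_mem_ker_of_comp_eq_zero hk),
    LinearMap.ext fun t => Subtype.ext <| by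
      show k.g (W.phi t) = B.phi (lT (LinearMap.ker v.f).subtype
        (lT (k.f.codRestrict _ (f_mem_ker_of_comp_eq_zero hk)) t))
      rw [lT_comp_apply]
      exact comm_apply k t⟩

lemma kerLift_ι (k : W ⟶ B) (hk : k ≫ v = 0) : kerLift k hk ≫ kerι v = k := rfl

variable (v)

noncomputable def kerIsLimit : IsLimit (KernelFork.ofι (kerι v) (kerι_comp v)) :=
  KernelFork.IsLimit.ofι _ _ kerLift kerLift_ι fun _ _ _ hm => TriModHom.ext
    (LinearMap.ext fun x => Subtype.ext (LinearMap.congr_fun (congrArg TriModHom.f hm) x))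
    (LinearMap.ext fun y => Subtype.ext (LinearMap.congr_fun (congrArg TriModHom.g hm) y))

end Kernels

section Cokernels

variable {A B W : TriMod R S M} (u : A ⟶ B)

lemma exact_lT_mkQ :
    Function.Exact (lT (S := S) (M := M) u.f) (lT (S := S) (LinearMap.range u.f).mkQ) :=
  lTensor_exact M (LinearMap.exact_map_mkQ_range u.f) (Submodule.mkQ_surjective _)

lemma surjective_lT_mkQ :
    Function.Surjective (lT (S := S) (M := M) (LinearMap.range u.f).mkQ) :=
  LinearMap.lTensor_surjective M (Submodule.mkQ_surjective _)

lemma range_lT_le_ker :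
    LinearMap.range (lT (S := S) u.f) ≤ LinearMap.ker ((LinearMap.range u.g).mkQ ∘ₗ B.phi) := by
  rw [LinearMap.range_le_ker_iff, LinearMap.comp_assoc, ← u.comm, ← LinearMap.comp_assoc,
    LinearMap.range_mkQ_comp, LinearMap.zero_comp]

/-- The structure map of the cokernel descends along `M ⊗ (B.X → B.X ⧸ im u.f)`, whose kernel is
the image of `M ⊗ u.f` by right exactness of `M ⊗ -`. -/
noncomputable abbrev cokerObj : TriMod R S M :=
  ⟨B.X ⧸ LinearMap.range u.f, B.Y ⧸ LinearMap.range u.g,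
    (LinearMap.range (lT u.f)).liftQ _ (range_lT_le_ker u) ∘ₗ
      ((exact_lT_mkQ u).linearEquivOfSurjective (surjective_lT_mkQ u)).symm.toLinearMap⟩

lemma cokerObj_phi_lT (t : M ⊗[R] B.X) :
    (cokerObj u).phi (lT (S := S) (LinearMap.range u.f).mkQ t) =
      (LinearMap.range u.g).mkQ (B.phi t) := by
  show (LinearMap.range (lT u.f)).liftQ _ (range_lT_le_ker u)
    (((exact_lT_mkQ u).linearEquivOfSurjective (surjective_lT_mkQ u)).symm
      (lT (LinearMap.range u.f).mkQ t)) = _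
  rw [Function.Exact.linearEquivOfSurjective_symm_apply]
  rfl

noncomputable def cokerπ : B ⟶ cokerObj u :=
  ⟨(LinearMap.range u.f).mkQ, (LinearMap.range u.g).mkQ,
    LinearMap.ext fun t => (cokerObj_phi_lT u t).symm⟩

lemma comp_cokerπ : u ≫ cokerπ u = 0 :=
  (comp_eq_zero_iff _ _).2 ⟨LinearMap.range_mkQ_comp _, LinearMap.range_mkQ_comp _⟩

variable {u}

lemma range_f_le_ker_of_comp_eq_zero {k : B ⟶ W} (hk : u ≫ k = 0) :
    LinearMap.range u.f ≤ LinearMap.ker k.f :=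
  LinearMap.range_le_ker_iff.2 (congrArg TriModHom.f hk)

lemma range_g_le_ker_of_comp_eq_zero {k : B ⟶ W} (hk : u ≫ k = 0) :
    LinearMap.range u.g ≤ LinearMap.ker k.g :=
  LinearMap.range_le_ker_iff.2 (congrArg TriModHom.g hk)

noncomputable def cokerDesc (k : B ⟶ W) (hk : u ≫ k = 0) : cokerObj u ⟶ W :=
  ⟨(LinearMap.range u.f).liftQ k.f (range_f_le_ker_of_comp_eq_zero hk),
    (LinearMap.range u.g).liftQ k.g (range_g_le_ker_of_comp_eq_zero hk),
    LinearMap.ext fun t => by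
      obtain ⟨s, rfl⟩ := surjective_lT_mkQ u t
      show (LinearMap.range u.g).liftQ k.g (range_g_le_ker_of_comp_eq_zero hk)
          ((cokerObj u).phi (lT _ s)) =
        W.phi (lT ((LinearMap.range u.f).liftQ k.f (range_f_le_ker_of_comp_eq_zero hk)) (lT _ s))
      rw [cokerObj_phi_lT, lT_comp_apply, Submodule.liftQ_mkQ, Submodule.mkQ_apply,
        Submodule.liftQ_apply]
      exact comm_apply k s⟩

lemma cokerπ_desc (k : B ⟶ W) (hk : u ≫ k = 0) : cokerπ u ≫ cokerDesc k hk = k :=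
  TriModHom.ext (Submodule.liftQ_mkQ _ _ _) (Submodule.liftQ_mkQ _ _ _)

variable (u)

noncomputable def cokerIsColimit : IsColimit (CokernelCofork.ofπ (cokerπ u) (comp_cokerπ u)) :=
  CokernelCofork.IsColimit.ofπ _ _ cokerDesc cokerπ_desc fun k hk _ hm =>
    have h := hm.trans (cokerπ_desc k hk).symm
    TriModHom.ext (Submodule.linearMap_qext _ (congrArg TriModHom.f h))
      (Submodule.linearMap_qext _ (congrArg TriModHom.g h))

end Cokernels

section Exactness

variable {A B C : TriMod R S M}

lemma epi_kerLift {v : B ⟶ C} {k : A ⟶ B} (hk : k ≫ v = 0)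
    (hf : Function.Exact k.f v.f) (hg : Function.Exact k.g v.g) : Epi (kerLift k hk) :=
  epi_of_surjective _
    (fun ⟨x, hx⟩ => let ⟨a, ha⟩ := (hf x).1 hx; ⟨a, Subtype.ext ha⟩)
    (fun ⟨y, hy⟩ => let ⟨a, ha⟩ := (hg y).1 hy; ⟨a, Subtype.ext ha⟩)

lemma mono_cokerDesc {u : A ⟶ B} {k : B ⟶ C} (hk : u ≫ k = 0)
    (hf : Function.Exact u.f k.f) (hg : Function.Exact u.g k.g) : Mono (cokerDesc k hk) :=
  mono_of_injective _
    (LinearMap.ker_eq_bot.1 (Submodule.ker_liftQ_eq_bot _ _ _ fun x hx => (hf x).1 hx))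
    (LinearMap.ker_eq_bot.1 (Submodule.ker_liftQ_eq_bot _ _ _ fun y hy => (hg y).1 hy))

variable (T : ShortComplex (TriMod R S M))

noncomputable def homologyDataOfExact (hf : Function.Exact T.f.f T.g.f)
    (hg : Function.Exact T.f.g T.g.g) : T.HomologyData where
  left :=
    { K := kerObj T.g, H := ofFst PUnit, i := kerι T.g, π := 0
      wi := kerι_comp T.g, hi := kerIsLimit T.g, wπ := comp_zero
      hπ := CokernelCofork.IsColimit.ofEpiOfIsZero _ (epi_kerLift T.zero hf hg)
        (isZero_ofFst PUnit) }
  right :=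
    { Q := cokerObj T.f, H := ofFst PUnit, p := cokerπ T.f, ι := 0
      wp := comp_cokerπ T.f, hp := cokerIsColimit T.f, wι := zero_comp
      hι := KernelFork.IsLimit.ofMonoOfIsZero _ (mono_cokerDesc T.zero hf hg)
        (isZero_ofFst PUnit) }
  iso := Iso.refl _
  comm := by
    rw [zero_comp, eq_comm, comp_eq_zero_iff]
    exact ⟨LinearMap.ext fun ⟨x, hx⟩ => (Submodule.Quotient.mk_eq_zero _).2 ((hf x).1 hx),
      LinearMap.ext fun ⟨y, hy⟩ => (Submodule.Quotient.mk_eq_zero _).2 ((hg y).1 hy)⟩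

lemma exact_of_function_exact (hf : Function.Exact T.f.f T.g.f)
    (hg : Function.Exact T.f.g T.g.g) : T.Exact :=
  ⟨homologyDataOfExact T hf hg, isZero_ofFst PUnit⟩

variable {T}

lemma function_exact_f_of_exact (hT : T.Exact) : Function.Exact T.f.f T.g.f := by
  obtain ⟨hd, hz⟩ := hT.condition
  let h := hd.left
  have hsurj := surjective_f_of_isZero_cokernel h.hπ' hz
  let e := h.liftK (kerι T.g) (kerι_comp T.g)
  intro x
  refine ⟨fun hx => ?_, fun ⟨a, ha⟩ => ha ▸ LinearMap.congr_fun (congrArg TriModHom.f T.zero) a⟩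
  obtain ⟨a, ha⟩ := hsurj (e.f ⟨x, hx⟩)
  refine ⟨a, ?_⟩
  calc T.f.f a = h.i.f (h.f'.f a) := (LinearMap.congr_fun (congrArg TriModHom.f h.f'_i) a).symm
    _ = (e ≫ h.i).f ⟨x, hx⟩ := by rw [ha]; rfl
    _ = x := LinearMap.congr_fun (congrArg TriModHom.f (h.liftK_i _ _)) _

end Exactness

end TriMod

section TotallyAcyclic

open CategoryTheory Limits TriMod

variable {E : ChainComplex (ModuleCat R) ℤ}

lemma exactAt_e1c {i : ℤ} (hE : E.ExactAt i) (hME : (tensorComplex S M E).ExactAt i) :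
    (e1c R S M E).ExactAt i :=
  exact_of_function_exact _ ((ShortComplex.ShortExact.moduleCat_exact_iff_function_exact _).1 hE)
    ((ShortComplex.ShortExact.moduleCat_exact_iff_function_exact _).1 hME)

lemma exactAt_of_exactAt_e1c {i : ℤ} (h : (e1c R S M E).ExactAt i) : E.ExactAt i :=
  (ShortComplex.ShortExact.moduleCat_exact_iff_function_exact _).2 (function_exact_f_of_exact h)

lemma isTotallyAcyclic_e1c (h1 : Cond1 R S M) (hproj : ∀ i, Module.Projective R (E.X i))
    (hE : IsTotallyAcyclic E) : IsTotallyAcyclic (e1c R S M E) := by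
  obtain ⟨-, hex, hlift⟩ := hE
  refine ⟨fun i => projective_e1obj (E.X i), fun i => exactAt_e1c (hex i) (h1 E hproj hex i), ?_⟩
  intro P _ i g hg
  have := projective_fst_of_projective P
  obtain ⟨l, hl⟩ := hlift (ModuleCat.of R P.X) inferInstance i (ModuleCat.ofHom g.f)
    (ModuleCat.hom_ext (congrArg TriModHom.f hg))
  exact ⟨e1objLift l.hom, e1obj_hom_ext (congrArg ModuleCat.Hom.hom hl)⟩

lemma isTotallyAcyclic_of_e1c (h : IsTotallyAcyclic (e1c R S M E)) : IsTotallyAcyclic E := by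
  obtain ⟨hproj, hex, hlift⟩ := h
  refine ⟨fun i => ?_, fun i => exactAt_of_exactAt_e1c (hex i), ?_⟩
  · have : Module.Projective R (E.X i) := projective_fst_of_projective ((e1c R S M E).X i)
    exact ModuleCat.projective_of_categoryTheory_projective _
  · intro P _ i g hg
    obtain ⟨H, hH⟩ := hlift (e1obj R S M P) (projective_e1obj P) i ((e1fun R S M).map g)
      (e1obj_hom_ext (congrArg ModuleCat.Hom.hom hg))
    exact ⟨ModuleCat.ofHom H.f, ModuleCat.hom_ext (congrArg TriModHom.f hH)⟩

end TotallyAcyclic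

/-- If `M ⊗_R -` preserves acyclicity of acyclic complexes of projective `R`-modules,
then a complex `E` of projective `R`-modules is totally acyclic iff `e¹_λ(E)` is a
totally acyclic complex of projective Γ-modules. -/
theorem totallyAcyclic_iff_e1c (h1 : Cond1 R S M) (E : ChainComplex (ModuleCat R) ℤ)
    (hproj : ∀ i, Module.Projective R (E.X i)) :
    IsTotallyAcyclic E ↔ IsTotallyAcyclic (e1c R S M E) :=
  ⟨isTotallyAcyclic_e1c h1 hproj, isTotallyAcyclic_of_e1c⟩
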